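/- Let f : ℝⁿ → ℝ be a C¹ function with ∇f ≠ 0 everywhere that is a weak subsolution of the 1-harmonic equation with constant 1-tension field c ≥ 0, i.e., for every nonnegative Lipschitz function ψ with compact support, ∫ ⟨∇f/|∇f|, ∇ψ⟩ dx = −c ∫ ψ dx. Then c = 0; that is, f is 1-harmonic. -/

import Mathlib

/-!
Test the equation against the tent `ψ_r = max (r - ‖x‖) 0`. Since `∇f/|∇f|` has norm at most `1`
and `ψ_r` is `1`-Lipschitz and supported in the ball of radius `r`, the left-hand side is at most
`|B_r|` in absolute value, while `∫ ψ_r ≥ (r/2) |B_{r/2}|`. Hence `|c| r ≤ 2^(n+1)` for every `r > 0`,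
so `c = 0`.
-/

open MeasureTheory RealInnerProductSpace Metric

lemma norm_inv_norm_smul_le_one {E : Type*} [NormedAddCommGroup E] [NormedSpace ℝ E] (v : E) :
    ‖‖v‖⁻¹ • v‖ ≤ 1 := by
  rcases eq_or_ne v 0 with rfl | hv
  · simp
  · exact (norm_smul_inv_norm hv).le

section Tent

variable {E : Type*} [NormedAddCommGroup E]

def tent (r : ℝ) (x : E) : ℝ := max (r - ‖x‖) 0

lemma tent_nonneg (r : ℝ) (x : E) : 0 ≤ tent r x := le_max_right _ _

lemma lipschitzWith_tent (r : ℝ) : LipschitzWith 1 (tent (E := E) r) := by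
  show LipschitzWith 1 fun x : E => max (r - ‖x‖) 0
  simpa using ((LipschitzWith.const r).sub lipschitzWith_one_norm).max_const 0

lemma tent_eq_zero_of_notMem_closedBall {r : ℝ} {x : E} (hx : x ∉ closedBall 0 r) :
    tent r x = 0 := by
  rw [mem_closedBall, dist_zero_right, not_le] at hx
  exact max_eq_right (by linarith)

lemma tsupport_tent_subset (r : ℝ) : tsupport (tent (E := E) r) ⊆ closedBall 0 r :=
  closure_minimal (fun _ hx => by_contra fun h => hx (tent_eq_zero_of_notMem_closedBall h))
    isClosed_closedBall

lemma hasCompactSupport_tent [ProperSpace E] (r : ℝ) : HasCompactSupport (tent (E := E) r) :=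
  HasCompactSupport.intro (isCompact_closedBall 0 r) fun _ => tent_eq_zero_of_notMem_closedBall

lemma half_mul_measureReal_closedBall_le_integral_tent [ProperSpace E] [MeasurableSpace E]
    [OpensMeasurableSpace E] (μ : Measure E) [IsFiniteMeasureOnCompacts μ] (r : ℝ) :
    r / 2 * μ.real (closedBall 0 (r / 2)) ≤ ∫ x, tent r x ∂μ := by
  have hle : ∀ x, (closedBall (0 : E) (r / 2)).indicator (fun _ => r / 2) x ≤ tent r x := by
    intro x
    by_cases hx : x ∈ closedBall (0 : E) (r / 2)
    · rw [mem_closedBall, dist_zero_right] at hx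
      rw [Set.indicator_of_mem (mem_closedBall_zero_iff.mpr hx)]
      exact le_max_of_le_left (by linarith)
    · rw [Set.indicator_of_notMem hx]
      exact tent_nonneg r x
  calc r / 2 * μ.real (closedBall 0 (r / 2))
      = ∫ x, (closedBall (0 : E) (r / 2)).indicator (fun _ => r / 2) x ∂μ := by
        rw [integral_indicator_const _ measurableSet_closedBall, smul_eq_mul, mul_comm]
    _ ≤ ∫ x, tent r x ∂μ :=
        integral_mono ((integrable_indicator_iff measurableSet_closedBall).mpr
            (integrableOn_const measure_closedBall_lt_top.ne))
          ((lipschitzWith_tent r).continuous.integrable_of_hasCompactSupport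
            (hasCompactSupport_tent r))
          hle

end Tent

lemma norm_gradient_le_of_lipschitzWith {E : Type*} [NormedAddCommGroup E] [InnerProductSpace ℝ E]
    [CompleteSpace E] {ψ : E → ℝ} {L : NNReal} (hψ : LipschitzWith L ψ) (x : E) :
    ‖gradient ψ x‖ ≤ L := by
  rw [gradient, LinearIsometryEquiv.norm_map]
  exact norm_fderiv_le_of_lipschitz ℝ hψ

lemma norm_integral_inner_gradient_le {E : Type*} [NormedAddCommGroup E] [InnerProductSpace ℝ E]
    [CompleteSpace E] [MeasurableSpace E] [OpensMeasurableSpace E] (μ : Measure E)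
    [IsFiniteMeasureOnCompacts μ] {V : E → E} (hV : ∀ x, ‖V x‖ ≤ 1) {ψ : E → ℝ} {L : NNReal}
    (hψ : LipschitzWith L ψ) (hψc : HasCompactSupport ψ) :
    ‖∫ x, ⟪V x, gradient ψ x⟫ ∂μ‖ ≤ L * μ.real (tsupport ψ) := by
  have hbound : ∀ x, ‖⟪V x, gradient ψ x⟫‖ ≤ (tsupport ψ).indicator (fun _ => (L : ℝ)) x := by
    intro x
    by_cases hx : x ∈ tsupport ψ
    · rw [Set.indicator_of_mem hx]
      calc ‖⟪V x, gradient ψ x⟫‖ ≤ ‖V x‖ * ‖gradient ψ x‖ := norm_inner_le_norm _ _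
        _ ≤ 1 * L := mul_le_mul (hV x) (norm_gradient_le_of_lipschitzWith hψ x)
            (norm_nonneg _) zero_le_one
        _ = L := one_mul _
    · have hfderiv : fderiv ℝ ψ x = 0 :=
        Function.notMem_support.mp fun h => hx (support_fderiv_subset ℝ h)
      simp [Set.indicator_of_notMem hx, gradient, hfderiv]
  have hint : Integrable ((tsupport ψ).indicator fun _ => (L : ℝ)) μ :=
    (integrable_indicator_iff (isClosed_tsupport ψ).measurableSet).mpr
      (integrableOn_const hψc.isCompact.measure_lt_top.ne)
  calc ‖∫ x, ⟪V x, gradient ψ x⟫ ∂μ‖ ≤ ∫ x, (tsupport ψ).indicator (fun _ => (L : ℝ)) x ∂μ :=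
        norm_integral_le_of_norm_le hint (Filter.Eventually.of_forall hbound)
    _ = L * μ.real (tsupport ψ) := by
        rw [integral_indicator_const _ (isClosed_tsupport ψ).measurableSet, smul_eq_mul, mul_comm]

section BallEstimate

variable {E : Type*} [NormedAddCommGroup E] [InnerProductSpace ℝ E] [FiniteDimensional ℝ E]
  [MeasurableSpace E] [BorelSpace E] {μ : Measure E} [μ.IsAddHaarMeasure]

lemma abs_mul_le_of_integral_inner_gradient_eq {V : E → E} (hV : ∀ x, ‖V x‖ ≤ 1) {c : ℝ}
    (hweak : ∀ ψ : E → ℝ, (∃ L, LipschitzWith L ψ) → HasCompactSupport ψ → (∀ x, 0 ≤ ψ x) →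
      ∫ x, ⟪V x, gradient ψ x⟫ ∂μ = - (c * ∫ x, ψ x ∂μ))
    {r : ℝ} (hr : 0 < r) : |c| * r ≤ 2 ^ (Module.finrank ℝ E + 1) := by
  set d := Module.finrank ℝ E
  set v := μ.real (closedBall (0 : E) 1)
  have hv : 0 < v :=
    ENNReal.toReal_pos (measure_closedBall_pos μ 0 one_pos).ne' measure_closedBall_lt_top.ne
  have hupper : |c| * ∫ x, tent r x ∂μ ≤ μ.real (closedBall 0 r) := by
    calc |c| * ∫ x, tent r x ∂μ = ‖∫ x, ⟪V x, gradient (tent r) x⟫ ∂μ‖ := by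
          rw [hweak _ ⟨1, lipschitzWith_tent r⟩ (hasCompactSupport_tent r) (tent_nonneg r),
            norm_neg, norm_mul, Real.norm_eq_abs,
            Real.norm_of_nonneg (integral_nonneg (tent_nonneg r))]
      _ ≤ (1 : NNReal) * μ.real (tsupport (tent r)) :=
          norm_integral_inner_gradient_le μ hV (lipschitzWith_tent r) (hasCompactSupport_tent r)
      _ ≤ μ.real (closedBall 0 r) := by
          rw [NNReal.coe_one, one_mul]
          exact measureReal_mono (tsupport_tent_subset r) measure_closedBall_lt_top.ne
  have hball : |c| * (r / 2 * ((r / 2) ^ d * v)) ≤ r ^ d * v := by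
    rw [← Measure.addHaar_real_closedBall' μ 0 (by positivity),
      ← Measure.addHaar_real_closedBall' μ 0 hr.le]
    exact (mul_le_mul_of_nonneg_left (half_mul_measureReal_closedBall_le_integral_tent μ r)
      (abs_nonneg c)).trans hupper
  have hscaled : |c| * r * (r ^ d * v) ≤ 2 ^ (d + 1) * (r ^ d * v) := by
    calc |c| * r * (r ^ d * v) = 2 ^ (d + 1) * (|c| * (r / 2 * ((r / 2) ^ d * v))) := by
          rw [div_pow, pow_succ]
          field_simp
      _ ≤ 2 ^ (d + 1) * (r ^ d * v) := mul_le_mul_of_nonneg_left hball (by positivity)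
  exact le_of_mul_le_mul_right hscaled (by positivity)

lemma eq_zero_of_integral_inner_gradient_eq {V : E → E} (hV : ∀ x, ‖V x‖ ≤ 1) {c : ℝ}
    (hweak : ∀ ψ : E → ℝ, (∃ L, LipschitzWith L ψ) → HasCompactSupport ψ → (∀ x, 0 ≤ ψ x) →
      ∫ x, ⟪V x, gradient ψ x⟫ ∂μ = - (c * ∫ x, ψ x ∂μ)) :
    c = 0 := by
  by_contra hc
  have hc' : 0 < |c| := abs_pos.mpr hc
  set K : ℝ := 2 ^ (Module.finrank ℝ E + 1)
  have h := abs_mul_le_of_integral_inner_gradient_eq hV hweak (r := (K + 1) / |c|) (by positivity)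
  rw [mul_div_cancel₀ _ hc'.ne'] at h
  linarith

end BallEstimate

theorem one_tension_constant_eq_zero_general (n : ℕ) (f : EuclideanSpace ℝ (Fin n) → ℝ)
    (c : ℝ)
    (hweak : ∀ ψ : EuclideanSpace ℝ (Fin n) → ℝ,
      (∃ L, LipschitzWith L ψ) → HasCompactSupport ψ → (∀ x, 0 ≤ ψ x) →
      ∫ x, ⟪(‖gradient f x‖)⁻¹ • gradient f x, gradient ψ x⟫ = - (c * ∫ x, ψ x)) :
    c = 0 :=
  eq_zero_of_integral_inner_gradient_eq (fun x => norm_inv_norm_smul_le_one (gradient f x)) hweak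

/-- An entire C¹ weak subsolution of the 1-harmonic equation with constant
1-tension field `c ≥ 0` must have `c = 0`, i.e. it is 1-harmonic. -/
theorem one_tension_constant_eq_zero (n : ℕ) (f : EuclideanSpace ℝ (Fin n) → ℝ)
    (c : ℝ) (hc : 0 ≤ c)
    (hf : ContDiff ℝ 1 f) (hf0 : ∀ x, gradient f x ≠ 0)
    (hweak : ∀ ψ : EuclideanSpace ℝ (Fin n) → ℝ,
      (∃ L, LipschitzWith L ψ) → HasCompactSupport ψ → (∀ x, 0 ≤ ψ x) →
      ∫ x, ⟪(‖gradient f x‖)⁻¹ • gradient f x, gradient ψ x⟫ = - (c * ∫ x, ψ x)) :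
    c = 0 :=
  one_tension_constant_eq_zero_general n f c hweak
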